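/- arXiv:1711.04938 — 2 statements merged into one kernel-verified Lean document; each statement's English description precedes it below -/
import Mathlib

section
/- Let κ be a regular uncountable cardinal, let λ > κ be an inaccessible cardinal, and let U be a κ-complete normal fine ultrafilter on P_κ(λ). Then the set {P ∈ P_κ(λ) : λ_P is an inaccessible cardinal} belongs to U. -/
open Set Cardinal

/-- The order type of a set of ordinals. -/
noncomputable def otp (S : Set Ordinal.{0}) : Ordinal.{0} :=
  sInf {α : Ordinal.{0} | Nonempty (↥S ≃o ↥(Iio α))}

/-- `P_κ(λ)`: sets `P ⊆ λ` of order type `< κ` with `P ∩ κ` an ordinal `< κ`. -/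
def PklSet (κ lam : Cardinal.{0}) : Set (Set Ordinal.{0}) :=
  {P | P ⊆ Iio lam.ord ∧ otp P < κ.ord ∧ ∃ α < κ.ord, P ∩ Iio κ.ord = Iio α}

/-- `λ_P`, the order type of `P`. -/
noncomputable def lpt (P : Set Ordinal.{0}) : Ordinal.{0} := otp P

/-- `κ_P = P ∩ κ` (as an ordinal, i.e. the order type of `P ∩ κ`). -/
noncomputable def kpt (κ : Cardinal.{0}) (P : Set Ordinal.{0}) : Ordinal.{0} :=
  otp (P ∩ Iio κ.ord)

/-- `P ≺ Q` iff `P ⊆ Q` and `λ_P < κ_Q`. -/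
def Prec (κ : Cardinal.{0}) (P Q : Set Ordinal.{0}) : Prop := P ⊆ Q ∧ lpt P < kpt κ Q

/-- `U` is `κ`-complete: closed under intersections of families of fewer than `κ` members. -/
def PklComplete (κ : Cardinal.{0}) {X : Type*} (U : Ultrafilter X) : Prop :=
  ∀ γ : Ordinal.{0}, γ.card < κ → ∀ f : ↥(Iio γ) → Set X, (∀ i, f i ∈ U) → (⋂ i, f i) ∈ U

/-- `U` is fine: for every `α < λ`, the set of `P` with `α ∈ P` is in `U`. -/
def PklFine (κ lam : Cardinal.{0}) (U : Ultrafilter ↥(PklSet κ lam)) : Prop :=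
  ∀ α < lam.ord, {P : ↥(PklSet κ lam) | α ∈ P.1} ∈ U

/-- `U` is normal: every choice function on a set in `U` is constant on a set in `U`. -/
def PklNormal (κ lam : Cardinal.{0}) (U : Ultrafilter ↥(PklSet κ lam)) : Prop :=
  ∀ A : Set ↥(PklSet κ lam), A ∈ U → ∀ f : ↥(PklSet κ lam) → Ordinal.{0},
    (∀ P ∈ A, f P ∈ P.1) → ∃ α : Ordinal.{0}, {P | P ∈ A ∧ f P = α} ∈ U

/-- An ordinal is an inaccessible cardinal. -/
def IsInaccOrd (o : Ordinal.{0}) : Prop := o.card.ord = o ∧ o.card.IsInaccessible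

/-- `o` is the least inaccessible (as an ordinal) above `a`. -/
def IsLeastInaccOrdAbove (a o : Ordinal.{0}) : Prop :=
  a < o ∧ IsInaccOrd o ∧ ∀ o', a < o' → IsInaccOrd o' → o ≤ o'

/-- `lam` is the least inaccessible cardinal above `κ`. -/
def IsLeastInaccAbove (κ lam : Cardinal.{0}) : Prop :=
  κ < lam ∧ lam.IsInaccessible ∧ ∀ μ, κ < μ → μ.IsInaccessible → lam ≤ μ

/-- A condition of the Levy collapse `Col(ν, <ρ)`, coded by its graph: a partial function
on `ν × ρ` of size `< ν` with `p(α, β) ∈ β`. -/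
def IsLevyCond (ν ρ : Cardinal.{0}) (s : Set ((Ordinal.{0} × Ordinal.{0}) × Ordinal.{0})) :
    Prop :=
  (∀ x ∈ s, x.1.1 < ν.ord ∧ x.1.2 < ρ.ord ∧ x.2 < x.1.2) ∧
  (∀ x ∈ s, ∀ y ∈ s, x.1 = y.1 → x.2 = y.2) ∧
  Cardinal.mk ↥(Prod.fst '' s) < Cardinal.lift.{1} ν

/-!
Each clause of "`otp P` is inaccessible" holds of `λ`, and normality reflects it to almost all
`P`. If a clause failed on a `U`-large set, its witness (an ordinal `x < otp P` with
`|P| ≤ 2 ^ |x|`, or a cofinal subset of `P` of small order type) can be pressed down by normality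
to a single `δ < λ`, so that almost every `P` (or a cofinal part of it) injects into
`𝒫 (P ∩ δ)`. Taking `U`-limits of these injections, pointwise by normality, injects `λ`
(respectively a cofinal subset of `λ`) into `𝒫 δ`, which is impossible for a regular strong limit.
Countable completeness puts `ω` inside almost every `P`, which rules out countable order types.
-/

open Filter Ordinal
open scoped Ordinal symmDiff

universe u

theorem otp_eq_of_typeLT_eq {S : Set Ordinal.{0}} {t : Ordinal.{0}}
    (h : typeLT S = Ordinal.lift.{1} t) : otp S = t := by
  have hiso : {α : Ordinal.{0} | Nonempty (S ≃o Iio α)} = {t} := by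
    ext α
    have hα : Nonempty (S ≃o Iio α) ↔ typeLT S = typeLT (Iio α) :=
      ⟨fun ⟨e⟩ => e.ordinalType_congr, fun he => ⟨OrderIso.ofRelIsoLT (type_eq.1 he).some⟩⟩
    rw [mem_ofPred, mem_singleton_iff, hα, h, type_lt_Iio, Ordinal.lift_inj, eq_comm]
  rw [otp, hiso, csInf_singleton]

/-- Boundedness matters: an unbounded `S` has order type outside `Ordinal.{0}`, and `otp S` is
then the junk value `sInf ∅ = 0`. -/
theorem lift_otp {S : Set Ordinal.{0}} (hS : BddAbove S) :
    Ordinal.lift.{1} (otp S) = typeLT S := by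
  obtain ⟨a, ha⟩ := hS
  have : typeLT S ≤ Ordinal.lift.{1} (Order.succ a) := by
    rw [← type_lt_Iio]
    exact type_mono fun x hx => Order.lt_succ_of_le (ha hx)
  obtain ⟨t, ht⟩ := mem_range_lift_of_le this
  rw [← ht, otp_eq_of_typeLT_eq ht.symm]

theorem mk_eq_lift_card_otp {S : Set Ordinal.{0}} (hS : BddAbove S) :
    #S = Cardinal.lift.{1} (otp S).card := by
  rw [lift_card, lift_otp hS, card_type]

theorem exists_mem_otp_inter_Iio_eq {S : Set Ordinal.{0}} (hS : BddAbove S) {ξ : Ordinal.{0}}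
    (hξ : ξ < otp S) : ∃ x ∈ S, otp (S ∩ Iio x) = ξ := by
  rw [← Ordinal.lift_lt.{1, 0}, lift_otp hS] at hξ
  obtain ⟨y, hy⟩ := typein_surj _ hξ
  refine ⟨y.1, y.2, otp_eq_of_typeLT_eq ?_⟩
  rw [← hy, ← type_Iio_lt]
  exact OrderIso.ordinalType_congr
    { toFun := fun z => ⟨⟨z.1, z.2.1⟩, z.2.2⟩
      invFun := fun z => ⟨z.1.1, z.1.2, z.2⟩
      left_inv := fun _ => rfl
      right_inv := fun _ => rfl
      map_rel_iff' := Iff.rfl }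

theorem exists_cofinal_subset_mk_eq_lift_cof_otp {S : Set Ordinal.{0}} (hS : BddAbove S) :
    ∃ C ⊆ S, (∀ y ∈ S, ∃ x ∈ C, y ≤ x) ∧ #C = Cardinal.lift.{1} (otp S).cof := by
  obtain ⟨s, hs, hmk⟩ := Order.exists_cof_eq S
  refine ⟨Subtype.val '' s, Subtype.coe_image_subset S s, fun y hy => ?_, ?_⟩
  · obtain ⟨x, hx, hyx⟩ := hs ⟨y, hy⟩
    exact ⟨x, mem_image_of_mem _ hx, hyx⟩
  · rw [mk_image_eq Subtype.val_injective, hmk, lift_cof, lift_otp hS, cof_type]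

theorem lift_cof_le_mk_of_forall_exists_le {s : Set Ordinal.{u}} {o : Ordinal.{u}}
    (hs : s ⊆ Iio o) (hcof : ∀ β < o, ∃ x ∈ s, β ≤ x) :
    Cardinal.lift.{u + 1} o.cof ≤ #s :=
  calc Cardinal.lift.{u + 1} o.cof = Order.cof (Iio o) := by rw [cof_Iio, lift_cof]
    _ ≤ #(Subtype.val ⁻¹' s : Set (Iio o)) := Order.cof_le fun β => by
        obtain ⟨x, hx, hβx⟩ := hcof β.1 β.2
        exact ⟨⟨x, hs hx⟩, hx, hβx⟩
    _ ≤ #s := mk_preimage_of_injective _ _ Subtype.val_injective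

theorem exists_mapsTo_powerset_injOn_of_mk_le {α : Type*} {S T : Set α} (h : #S ≤ 2 ^ #T) :
    ∃ j : α → Set α, MapsTo j S (𝒫 T) ∧ InjOn j S := by
  classical
  rw [← mk_powerset] at h
  obtain ⟨e⟩ := h
  refine ⟨fun x => if hx : x ∈ S then (e ⟨x, hx⟩).1 else ∅, fun x hx => ?_,
    fun x hx y hy hxy => ?_⟩
  · simp only [dif_pos hx]
    exact (e _).2
  · simp only [dif_pos hx, dif_pos hy] at hxy
    exact congrArg Subtype.val (e.injective (Subtype.ext hxy))

theorem bddAbove_of_mem_PklSet {κ lam : Cardinal.{0}} {P : Set Ordinal.{0}}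
    (hP : P ∈ PklSet κ lam) : BddAbove P :=
  bddAbove_Iio.mono hP.1

section NormalUltrafilter

variable {κ lam : Cardinal.{0}} {U : Ultrafilter ↥(PklSet κ lam)}

theorem PklComplete.eventually_Iio_subset (hcomp : PklComplete κ U) (hfine : PklFine κ lam U)
    {γ : Ordinal.{0}} (hγ : γ < lam.ord) (hcard : γ.card < κ) :
    ∀ᶠ P in U.toFilter, Iio γ ⊆ P.1 := by
  filter_upwards [hcomp γ hcard (fun i => {P | i.1 ∈ P.1}) fun i => hfine i.1 (i.2.trans hγ)]
    with P hP x hx using mem_iInter.1 hP ⟨x, hx⟩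

theorem PklNormal.exists_eventually_eq (hnorm : PklNormal κ lam U)
    {f : ↥(PklSet κ lam) → Ordinal.{0}} (hf : ∀ᶠ P in U.toFilter, f P ∈ P.1) :
    ∃ α, ∀ᶠ P in U.toFilter, f P = α := by
  obtain ⟨α, hα⟩ := hnorm _ hf f fun _ => id
  exact ⟨α, mem_of_superset hα fun _ h => h.2⟩

theorem PklNormal.liminf_nonempty (hnorm : PklNormal κ lam U)
    {S : ↥(PklSet κ lam) → Set Ordinal.{0}} (h : ∀ᶠ P in U.toFilter, (S P ∩ P.1).Nonempty) :
    (liminf S U.toFilter).Nonempty := by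
  obtain ⟨f, hf⟩ := h.choice
  obtain ⟨α, hα⟩ := hnorm.exists_eventually_eq (hf.mono fun _ h => h.2)
  exact ⟨α, mem_liminf_iff_eventually_mem.2 ((hf.and hα).mono fun _ h => h.2 ▸ h.1.1)⟩

theorem PklNormal.liminf_ne (hnorm : PklNormal κ lam U)
    {S T : ↥(PklSet κ lam) → Set Ordinal.{0}}
    (h : ∀ᶠ P in U.toFilter, S P ≠ T P ∧ S P ⊆ P.1 ∧ T P ⊆ P.1) :
    liminf S U.toFilter ≠ liminf T U.toFilter := by
  intro hST
  obtain ⟨ξ, hξ⟩ := hnorm.liminf_nonempty (S := fun P => S P ∆ T P) <| h.mono fun P hP => by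
    rw [inter_eq_left.2 (symmDiff_subset_union.trans (union_subset hP.2.1 hP.2.2)),
      symmDiff_nonempty]
    exact hP.1
  have hiff : (∀ᶠ P in U.toFilter, ξ ∈ S P) ↔ ∀ᶠ P in U.toFilter, ξ ∈ T P := by
    simp only [← mem_liminf_iff_eventually_mem, hST]
  have hagree : ∀ᶠ P in U.toFilter, (ξ ∈ S P ↔ ξ ∈ T P) := by
    rcases U.em (fun P => ξ ∈ S P) with hS | hS
    · exact (hS.and (hiff.1 hS)).mono fun _ h => iff_of_true h.1 h.2
    · have hT : ∀ᶠ P in U.toFilter, ξ ∉ T P :=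
        Ultrafilter.eventually_not.2 fun hT => Ultrafilter.eventually_not.1 hS (hiff.2 hT)
      exact (hS.and hT).mono fun _ h => iff_of_false h.1 h.2
  obtain ⟨P, hP, hPξ⟩ := ((mem_liminf_iff_eventually_mem.1 hξ).and hagree).exists
  rw [mem_symmDiff] at hP
  tauto

theorem PklNormal.mk_liminf_le (hnorm : PklNormal κ lam U)
    {S : ↥(PklSet κ lam) → Set Ordinal.{0}} {δ : Ordinal.{0}}
    (h : ∀ᶠ P in U.toFilter, #(S P) ≤ 2 ^ #↥(P.1 ∩ Iio δ)) :
    #↥(liminf S U.toFilter) ≤ 2 ^ Cardinal.lift.{1} δ.card := by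
  obtain ⟨j, hj⟩ := (h.mono fun _ hP => exists_mapsTo_powerset_injOn_of_mk_le hP).choice
  set J : Ordinal.{0} → Set Ordinal.{0} := fun x => liminf (j · x) U.toFilter
  have hmaps : MapsTo J (liminf S U.toFilter) (𝒫 Iio δ) := by
    intro x hx ξ hξ
    rw [mem_liminf_iff_eventually_mem] at hx hξ
    obtain ⟨P, hP, hxP, hξP⟩ := (hj.and (hx.and hξ)).exists
    exact (hP.1 hxP hξP).2
  have hinj : InjOn J (liminf S U.toFilter) := by
    intro x hx y hy hxy
    by_contra hne
    rw [mem_liminf_iff_eventually_mem] at hx hy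
    refine hnorm.liminf_ne ((hj.and (hx.and hy)).mono fun P hP => ?_) hxy
    exact ⟨fun h => hne (hP.1.2 hP.2.1 hP.2.2 h), (hP.1.1 hP.2.1).trans inter_subset_left,
      (hP.1.1 hP.2.2).trans inter_subset_left⟩
  calc #↥(liminf S U.toFilter) = #↥(J '' liminf S U.toFilter) :=
        (mk_image_eq_of_injOn J _ hinj).symm
    _ ≤ #(𝒫 Iio δ) := mk_le_mk_of_subset hmaps.image_subset
    _ = 2 ^ Cardinal.lift.{1} δ.card := by rw [mk_powerset, Cardinal.mk_Iio_ordinal]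

theorem PklNormal.not_eventually_mk_le_two_power (hlam : IsStrongPrelimit lam)
    (hnorm : PklNormal κ lam U) (hfine : PklFine κ lam U) {δ : Ordinal.{0}} (hδ : δ < lam.ord) :
    ¬∀ᶠ P in U.toFilter, #P.1 ≤ 2 ^ #↥(P.1 ∩ Iio δ) := by
  intro h
  have hsub : Iio lam.ord ⊆ liminf (fun P => P.1) U.toFilter := fun α hα =>
    mem_liminf_iff_eventually_mem.2 (hfine α hα)
  have := (mk_le_mk_of_subset hsub).trans (hnorm.mk_liminf_le h)
  rw [Cardinal.mk_Iio_ordinal, card_ord, ← lift_two_power, Cardinal.lift_le] at this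
  exact this.not_gt (hlam (lt_ord.1 hδ))

theorem PklNormal.exists_eventually_otp_inter_Iio_eq (hnorm : PklNormal κ lam U)
    {g : ↥(PklSet κ lam) → Ordinal.{0}} (hg : ∀ᶠ P in U.toFilter, g P < otp P.1) :
    ∃ δ < lam.ord, ∀ᶠ P in U.toFilter, otp (P.1 ∩ Iio δ) = g P := by
  obtain ⟨f, hf⟩ :=
    (hg.mono fun P hP => exists_mem_otp_inter_Iio_eq (bddAbove_of_mem_PklSet P.2) hP).choice
  obtain ⟨δ, hδ⟩ := hnorm.exists_eventually_eq (hf.mono fun _ h => h.1)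
  obtain ⟨P, hP, hPδ⟩ := (hf.and hδ).exists
  exact ⟨δ, P.2.1 (hPδ ▸ hP.1), (hf.and hδ).mono fun _ h => h.2 ▸ h.1.2⟩


theorem eventually_ord_card_otp_eq (hlam : IsStrongPrelimit lam) (hnorm : PklNormal κ lam U)
    (hfine : PklFine κ lam U) : ∀ᶠ P in U.toFilter, (otp P.1).card.ord = otp P.1 := by
  by_contra h
  rw [← Ultrafilter.eventually_not] at h
  obtain ⟨δ, hδ, hPδ⟩ := hnorm.exists_eventually_otp_inter_Iio_eq
    (h.mono fun P hP => (ord_card_le _).lt_of_ne hP)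
  refine hnorm.not_eventually_mk_le_two_power hlam hfine hδ (hPδ.mono fun P hP => ?_)
  have hPb := bddAbove_of_mem_PklSet P.2
  rw [mk_eq_lift_card_otp hPb, mk_eq_lift_card_otp (hPb.mono inter_subset_left), hP, card_ord,
    ← lift_two_power, Cardinal.lift_le]
  exact (cantor _).le

theorem eventually_aleph0_lt_card_otp (hκ : ℵ₀ < κ) (hω : ℵ₀ < lam)
    (hlam : IsStrongPrelimit lam) (hcomp : PklComplete κ U) (hnorm : PklNormal κ lam U)
    (hfine : PklFine κ lam U) : ∀ᶠ P in U.toFilter, ℵ₀ < (otp P.1).card := by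
  by_contra h
  rw [← Ultrafilter.eventually_not] at h
  have hω_lt : ω < lam.ord := by rwa [lt_ord, card_omega0]
  have hωP := hcomp.eventually_Iio_subset hfine hω_lt (by rwa [card_omega0])
  refine hnorm.not_eventually_mk_le_two_power hlam hfine hω_lt ((h.and hωP).mono fun P hP => ?_)
  rw [inter_eq_right.2 hP.2, Cardinal.mk_Iio_ordinal, card_omega0, lift_aleph0,
    mk_eq_lift_card_otp (bddAbove_of_mem_PklSet P.2)]
  calc Cardinal.lift.{1} (otp P.1).card ≤ ℵ₀ := lift_le_aleph0.2 (not_lt.1 hP.1)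
    _ ≤ 2 ^ ℵ₀ := (cantor _).le

theorem eventually_isStrongPrelimit_card_otp (hlam : IsStrongPrelimit lam)
    (hnorm : PklNormal κ lam U) (hfine : PklFine κ lam U) :
    ∀ᶠ P in U.toFilter, IsStrongPrelimit (otp P.1).card := by
  by_contra h
  rw [← Ultrafilter.eventually_not] at h
  obtain ⟨x, hx⟩ := (h.mono fun P hP => by simpa [IsStrongPrelimit] using hP).choice
  obtain ⟨δ, hδ, hPδ⟩ := hnorm.exists_eventually_otp_inter_Iio_eq (g := fun P => (x P).ord)
    (hx.mono fun P hP => (ord_lt_ord.2 hP.1).trans_le (ord_card_le _))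
  refine hnorm.not_eventually_mk_le_two_power hlam hfine hδ ((hx.and hPδ).mono fun P hP => ?_)
  have hPb := bddAbove_of_mem_PklSet P.2
  rw [mk_eq_lift_card_otp hPb, mk_eq_lift_card_otp (hPb.mono inter_subset_left), hP.2, card_ord,
    ← lift_two_power, Cardinal.lift_le]
  exact hP.1.2

theorem eventually_card_otp_le_cof (hreg : lam.IsRegular) (hlam : IsStrongPrelimit lam)
    (hnorm : PklNormal κ lam U) (hfine : PklFine κ lam U) :
    ∀ᶠ P in U.toFilter, (otp P.1).card ≤ (otp P.1).cof := by
  by_contra h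
  rw [← Ultrafilter.eventually_not] at h
  choose C hCP hCcof hCmk using fun P : ↥(PklSet κ lam) =>
    exists_cofinal_subset_mk_eq_lift_cof_otp (bddAbove_of_mem_PklSet P.2)
  obtain ⟨δ, hδ, hPδ⟩ :=
    hnorm.exists_eventually_otp_inter_Iio_eq (g := fun P => (otp P.1).cof.ord) <|
      h.mono fun P hP => (ord_lt_ord.2 (not_le.1 hP)).trans_le (ord_card_le _)
  have hLmk : #↥(liminf C U.toFilter) ≤ 2 ^ Cardinal.lift.{1} δ.card :=
    hnorm.mk_liminf_le <| hPδ.mono fun P hP => by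
      rw [hCmk, mk_eq_lift_card_otp ((bddAbove_of_mem_PklSet P.2).mono inter_subset_left), hP,
        card_ord]
      exact (cantor _).le
  have hL_lt : liminf C U.toFilter ⊆ Iio lam.ord := fun x hx => by
    obtain ⟨P, hP⟩ := (mem_liminf_iff_eventually_mem.1 hx).exists
    exact P.2.1 (hCP P hP)
  have hLcof : ∀ β < lam.ord, ∃ x ∈ liminf C U.toFilter, β ≤ x := by
    intro β hβ
    obtain ⟨x, hx⟩ := hnorm.liminf_nonempty (S := fun P => C P ∩ Ici β) <|
      Eventually.mono (hfine β hβ) fun P hβP => by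
        obtain ⟨x, hx, hβx⟩ := hCcof P β hβP
        exact ⟨x, ⟨hx, hβx⟩, hCP P hx⟩
    rw [mem_liminf_iff_eventually_mem] at hx
    obtain ⟨P, -, hβx⟩ := hx.exists
    exact ⟨x, mem_liminf_iff_eventually_mem.2 (hx.mono fun _ h => h.1), hβx⟩
  have := (lift_cof_le_mk_of_forall_exists_le hL_lt hLcof).trans hLmk
  rw [hreg.cof_ord, ← lift_two_power, Cardinal.lift_le] at this
  exact this.not_gt (hlam (lt_ord.1 hδ))

end NormalUltrafilter

theorem lambdaP_inaccessible_set_mem_general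
    (κ lam : Cardinal.{0}) (huncount : ℵ₀ < κ)
    (hlam : lam.IsInaccessible)
    (U : Ultrafilter ↥(PklSet κ lam))
    (hcomp : PklComplete κ U) (hnorm : PklNormal κ lam U) (hfine : PklFine κ lam U) :
    {P : ↥(PklSet κ lam) | IsInaccOrd (lpt P.1)} ∈ U := by
  have hsl := hlam.isStrongPrelimit
  filter_upwards [eventually_ord_card_otp_eq hsl hnorm hfine,
    eventually_aleph0_lt_card_otp huncount hlam.aleph0_lt hsl hcomp hnorm hfine,
    eventually_card_otp_le_cof hlam.isRegular hsl hnorm hfine,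
    eventually_isStrongPrelimit_card_otp hsl hnorm hfine] with P hord hω hcof hsp
  exact ⟨hord, hω, hord ▸ hcof, hsp⟩

/-- If `κ` is regular uncountable, `λ > κ` inaccessible, and `U` a `κ`-complete
normal fine ultrafilter on `P_κ(λ)`, then `{P : λ_P is inaccessible}` belongs to `U`. -/
theorem lambdaP_inaccessible_set_mem
    (κ lam : Cardinal.{0}) (hreg : κ.IsRegular) (huncount : ℵ₀ < κ)
    (hkl : κ < lam) (hlam : lam.IsInaccessible)
    (U : Ultrafilter ↥(PklSet κ lam))
    (hcomp : PklComplete κ U) (hnorm : PklNormal κ lam U) (hfine : PklFine κ lam U) :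
    {P : ↥(PklSet κ lam) | IsInaccOrd (lpt P.1)} ∈ U :=
  lambdaP_inaccessible_set_mem_general κ lam huncount hlam U hcomp hnorm hfine
end

section
/- Let κ be a regular uncountable cardinal, let λ ≥ κ be a cardinal, and let U be a κ-complete normal fine ultrafilter on P_κ(λ). Then the set {P ∈ P_κ(λ) : κ_P is an inaccessible cardinal} belongs to U. -/
open Set Cardinal

/-!
Fineness makes `κ_P` unbounded below `κ` along `U`, so `P ↦ κ_P` is constant on no set of `U`.
On the other hand normality (Fodor's lemma) makes every function pressing down below `κ_P`
constant on a set of `U`, and `κ`-completeness extends this to `< κ`-tuples of such functions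
and to maps into a set of size `2 ^ c` with `c < κ` (each of the `c` bits is constant on a set
of `U`); the latter makes `κ` itself a strong limit.
If `cof κ_P < κ_P` on a set of `U`, pressing down the cofinality and then a cofinal sequence of
each `κ_P` makes `κ_P` constant. If `κ_P ≤ 2 ^ β` for some `β < κ_P`, pressing down `β` bounds
`κ_P` by `2 ^ β < κ` on a set of `U`, which fineness forbids.
-/

open Filter
open scoped Ordinal

theorem Ordinal.exists_iSup_add_one_eq_of_cof_ord_eq {o ρ : Ordinal.{u}} (h : o.cof.ord = ρ) :
    ∃ g : ρ.ToType → Ordinal.{u}, (∀ i, g i < o) ∧ ⨆ i, g i + 1 = o := by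
  obtain ⟨f, hf⟩ := exists_isFundamentalSeq h
  refine ⟨fun i => (f (ToType.mk.symm i)).1, fun i => (f _).2, ?_⟩
  exact (ToType.mk.symm.toEquiv.iSup_comp (g := fun j => (f j).1 + 1)).trans hf.iSup_add_one_eq

theorem isInaccOrd_of_cof_ord_eq {o : Ordinal.{0}} (hω : ω < o) (hreg : o.cof.ord = o)
    (hlim : IsStrongPrelimit o.card) : IsInaccOrd o := by
  have hcof : o.cof = o.card := by simpa only [Cardinal.card_ord] using congrArg Ordinal.card hreg
  have hcard : o.card.ord = o := by rw [← hcof, hreg]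
  refine ⟨hcard, ⟨?_, ?_, hlim⟩⟩
  · rwa [← Cardinal.ord_lt_ord, hcard, Cardinal.ord_aleph0]
  · rw [hcard, hcof]

lemma otp_Iio (a : Ordinal.{0}) : otp (Iio a) = a := by
  have key : ∀ b : Ordinal.{0}, Nonempty (↥(Iio a) ≃o ↥(Iio b)) ↔ b = a := fun b =>
    ⟨fun ⟨e⟩ => by
      have := e.toRelIsoLT.ordinalType_congr
      rwa [Ordinal.type_Iio_lt, Ordinal.type_Iio_lt, Ordinal.typein_ordinal,
        Ordinal.typein_ordinal, Ordinal.lift_inj, eq_comm] at this,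
     fun h => h ▸ ⟨OrderIso.refl _⟩⟩
  simp only [otp, key, ofPred_eq_eq_singleton, csInf_singleton]

section Ultrafilter

variable {κ : Cardinal.{0}} {X : Type*} {U : Ultrafilter X}

theorem PklComplete.eventually_forall (hcomp : PklComplete κ U) {ι : Type} (hι : #ι < κ)
    {p : ι → X → Prop} (hp : ∀ i, ∀ᶠ x in U, p i x) : ∀ᶠ x in U, ∀ i, p i x := by
  obtain ⟨e⟩ : Nonempty (ι ≃ Iio (#ι).ord) := by
    rw [← Cardinal.lift_mk_eq', Cardinal.mk_Iio_ordinal, Cardinal.card_ord, Cardinal.lift_lift]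
  filter_upwards [hcomp _ (by rwa [Cardinal.card_ord]) (fun j => {x | p (e.symm j) x})
    fun j => hp _] with x hx i
  simpa using mem_iInter.1 hx (e i)

theorem PklComplete.exists_eventually_eq_of_mk_le_two_power (hcomp : PklComplete κ U)
    {c : Cardinal.{0}} (hc : c < κ) {Y : Type} (hY : #Y ≤ 2 ^ c) (f : X → Y) :
    ∃ y, ∀ᶠ x in U, f x = y := by
  obtain ⟨e⟩ : Nonempty (Y ↪ (c.out → Prop)) := by
    rwa [← Cardinal.le_def, ← Cardinal.power_def, Cardinal.mk_Prop, Cardinal.mk_out]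
  have hcoord : ∀ i, ∃ p : Prop, ∀ᶠ x in U, e (f x) i = p := fun i =>
    (U.em fun x => e (f x) i).elim (fun h => ⟨True, h.mono fun _ => eq_true⟩)
      fun h => ⟨False, h.mono fun _ => eq_false⟩
  choose p hp using hcoord
  have hconst := hcomp.eventually_forall (by rwa [Cardinal.mk_out]) hp
  obtain ⟨x₀, hx₀⟩ := hconst.exists
  exact ⟨f x₀, hconst.mono fun x hx => e.injective (funext fun i => (hx i).trans (hx₀ i).symm)⟩

end Ultrafilter

section Pkl

variable {κ lam : Cardinal.{0}} {U : Ultrafilter ↥(PklSet κ lam)}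

lemma kpt_lt_ord (P : ↥(PklSet κ lam)) : kpt κ P.1 < κ.ord := by
  obtain ⟨-, -, α, hα, hP⟩ := P.2
  rwa [kpt, hP, otp_Iio]

lemma lt_kpt_iff {α : Ordinal.{0}} (P : ↥(PklSet κ lam)) :
    α < kpt κ P.1 ↔ α ∈ P.1 ∧ α < κ.ord := by
  obtain ⟨-, -, β, -, hP⟩ := P.2
  rw [kpt, hP, otp_Iio, ← mem_Iio, ← hP]
  rfl

theorem PklFine.eventually_lt_kpt (hkl : κ ≤ lam) (hfine : PklFine κ lam U) {α : Ordinal.{0}}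
    (hα : α < κ.ord) : ∀ᶠ (P : ↥(PklSet κ lam)) in U, α < kpt κ P.1 := by
  filter_upwards [hfine α (hα.trans_le (Cardinal.ord_le_ord.2 hkl))] with P hP
  exact (lt_kpt_iff P).2 ⟨hP, hα⟩

theorem PklFine.not_eventually_kpt_eq (hkl : κ ≤ lam) (hfine : PklFine κ lam U)
    (c : Ordinal.{0}) : ¬ ∀ᶠ (P : ↥(PklSet κ lam)) in U, kpt κ P.1 = c := by
  intro hc
  obtain ⟨P₀, rfl⟩ := hc.exists
  obtain ⟨P, hP, hlt⟩ := (hc.and (hfine.eventually_lt_kpt hkl (kpt_lt_ord P₀))).exists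
  exact hlt.ne' hP

theorem PklNormal.exists_eventually_eq_of_lt_kpt (hnorm : PklNormal κ lam U)
    {f : ↥(PklSet κ lam) → Ordinal.{0}} (hf : ∀ᶠ P in U, f P < kpt κ P.1) :
    ∃ α, ∀ᶠ P in U, f P = α := by
  obtain ⟨α, hα⟩ := hnorm _ hf f fun P hP => ((lt_kpt_iff P).1 hP).1
  exact ⟨α, mem_of_superset hα fun _ hP => hP.2⟩

theorem PklNormal.exists_eventually_of_exists_lt_kpt (hnorm : PklNormal κ lam U)
    {q : Ordinal.{0} → ↥(PklSet κ lam) → Prop} (hq : ∀ᶠ P in U, ∃ β < kpt κ P.1, q β P) :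
    ∃ β, ∀ᶠ P in U, β < kpt κ P.1 ∧ q β P := by
  classical
  let f : ↥(PklSet κ lam) → Ordinal.{0} := fun P =>
    if h : ∃ β < kpt κ P.1, q β P then h.choose else 0
  have hf : ∀ᶠ P in U, f P < kpt κ P.1 ∧ q (f P) P := hq.mono fun P h => by
    simpa only [f, dif_pos h] using h.choose_spec
  obtain ⟨β, hβ⟩ := hnorm.exists_eventually_eq_of_lt_kpt (hf.mono fun _ h => h.1)
  exact ⟨β, (hf.and hβ).mono fun P ⟨h, hP⟩ => hP ▸ h⟩

theorem PklNormal.exists_eventually_of_exists_pi_lt_kpt (hnorm : PklNormal κ lam U)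
    (hcomp : PklComplete κ U) {ι : Type} (hι : #ι < κ)
    {q : (ι → Ordinal.{0}) → ↥(PklSet κ lam) → Prop}
    (hq : ∀ᶠ P in U, ∃ g : ι → Ordinal.{0}, (∀ i, g i < kpt κ P.1) ∧ q g P) :
    ∃ g, ∀ᶠ P in U, q g P := by
  classical
  let G : ↥(PklSet κ lam) → ι → Ordinal.{0} := fun P =>
    if h : ∃ g : ι → Ordinal.{0}, (∀ i, g i < kpt κ P.1) ∧ q g P then h.choose else fun _ => 0
  have hG : ∀ᶠ P in U, (∀ i, G P i < kpt κ P.1) ∧ q (G P) P := hq.mono fun P h => by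
    simpa only [G, dif_pos h] using h.choose_spec
  have hcoord : ∀ i, ∃ α, ∀ᶠ P in U, G P i = α := fun i =>
    hnorm.exists_eventually_eq_of_lt_kpt (hG.mono fun _ h => h.1 i)
  choose α hα using hcoord
  refine ⟨α, (hG.and (hcomp.eventually_forall hι hα)).mono fun P ⟨h, hP⟩ => ?_⟩
  rw [← funext hP]
  exact h.2

theorem isStrongPrelimit_of_pklComplete (hkl : κ ≤ lam) (hcomp : PklComplete κ U)
    (hfine : PklFine κ lam U) : IsStrongPrelimit κ := by
  intro c hc
  by_contra! hle
  obtain ⟨y, hy⟩ := hcomp.exists_eventually_eq_of_mk_le_two_power hc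
    (by rwa [Cardinal.mk_toType, Cardinal.card_ord])
    fun P => Ordinal.ToType.mk ⟨kpt κ P.1, kpt_lt_ord P⟩
  exact PklFine.not_eventually_kpt_eq hkl hfine _
    (hy.mono fun P hP => congrArg Subtype.val ((Ordinal.ToType.mk.symm_apply_eq).2 hP.symm).symm)

theorem eventually_cof_ord_kpt_eq (hkl : κ ≤ lam) (hcomp : PklComplete κ U)
    (hnorm : PklNormal κ lam U) (hfine : PklFine κ lam U) :
    ∀ᶠ (P : ↥(PklSet κ lam)) in U, (kpt κ P.1).cof.ord = kpt κ P.1 := by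
  by_contra hreg
  have hsing : ∀ᶠ (P : ↥(PklSet κ lam)) in U, ∃ ρ < kpt κ P.1, (kpt κ P.1).cof.ord = ρ :=
    (U.eventually_not.2 hreg).mono fun P hP => ⟨_, (Ordinal.ord_cof_le _).lt_of_ne hP, rfl⟩
  obtain ⟨ρ, hρ⟩ := hnorm.exists_eventually_of_exists_lt_kpt hsing
  obtain ⟨P₀, hρP₀, -⟩ := hρ.exists
  have hρκ : #ρ.ToType < κ := by
    rw [Cardinal.mk_toType]
    exact Cardinal.lt_ord.1 (hρP₀.trans (kpt_lt_ord P₀))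
  have hseq : ∀ᶠ (P : ↥(PklSet κ lam)) in U, ∃ g : ρ.ToType → Ordinal.{0},
      (∀ i, g i < kpt κ P.1) ∧ ⨆ i, g i + 1 = kpt κ P.1 :=
    hρ.mono fun _ hP => Ordinal.exists_iSup_add_one_eq_of_cof_ord_eq hP.2
  obtain ⟨g, hg⟩ := hnorm.exists_eventually_of_exists_pi_lt_kpt hcomp hρκ hseq
  exact PklFine.not_eventually_kpt_eq hkl hfine _ (hg.mono fun _ h => h.symm)

theorem eventually_isStrongPrelimit_card_kpt (hkl : κ ≤ lam) (hcomp : PklComplete κ U)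
    (hnorm : PklNormal κ lam U) (hfine : PklFine κ lam U) :
    ∀ᶠ (P : ↥(PklSet κ lam)) in U, IsStrongPrelimit (kpt κ P.1).card := by
  by_contra hlim
  have hbig : ∀ᶠ (P : ↥(PklSet κ lam)) in U, ∃ β < kpt κ P.1, (kpt κ P.1).card ≤ 2 ^ β.card :=
    (U.eventually_not.2 hlim).mono fun P hP => by
      obtain ⟨c, hc, hle⟩ := not_isStrongPrelimit_iff.1 hP
      exact ⟨c.ord, (Cardinal.ord_lt_ord.2 hc).trans_le (Cardinal.ord_card_le _),
        by rwa [Cardinal.card_ord]⟩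
  obtain ⟨β, hβ⟩ := hnorm.exists_eventually_of_exists_lt_kpt hbig
  obtain ⟨P₀, hβP₀, -⟩ := hβ.exists
  have hκ := isStrongPrelimit_of_pklComplete hkl hcomp hfine
  have hsucc : Order.succ (2 ^ β.card) < κ :=
    hκ.isSuccPrelimit.succ_lt (hκ (Cardinal.lt_ord.1 (hβP₀.trans (kpt_lt_ord P₀))))
  obtain ⟨P, ⟨-, hle⟩, hlt⟩ :=
    (hβ.and (hfine.eventually_lt_kpt hkl (Cardinal.ord_lt_ord.2 hsucc))).exists
  exact hle.not_gt (Order.succ_le_iff.1 (Cardinal.ord_le.1 hlt.le))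

end Pkl

theorem kappaP_inaccessible_set_mem_general
    (κ lam : Cardinal.{0}) (huncount : ℵ₀ < κ)
    (hkl : κ ≤ lam)
    (U : Ultrafilter ↥(PklSet κ lam))
    (hcomp : PklComplete κ U) (hnorm : PklNormal κ lam U) (hfine : PklFine κ lam U) :
    {P : ↥(PklSet κ lam) | IsInaccOrd (kpt κ P.1)} ∈ U := by
  have hω : ω < κ.ord := by rwa [← Cardinal.ord_aleph0, Cardinal.ord_lt_ord]
  filter_upwards [hfine.eventually_lt_kpt hkl hω,
    eventually_cof_ord_kpt_eq hkl hcomp hnorm hfine,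
    eventually_isStrongPrelimit_card_kpt hkl hcomp hnorm hfine] with P hωP hreg hlim
  exact isInaccOrd_of_cof_ord_eq hωP hreg hlim

/-- If `κ` is regular uncountable, `λ ≥ κ`, and `U` a `κ`-complete normal fine
ultrafilter on `P_κ(λ)`, then `{P : κ_P is inaccessible}` belongs to `U`. -/
theorem kappaP_inaccessible_set_mem
    (κ lam : Cardinal.{0}) (hreg : κ.IsRegular) (huncount : ℵ₀ < κ)
    (hkl : κ ≤ lam)
    (U : Ultrafilter ↥(PklSet κ lam))
    (hcomp : PklComplete κ U) (hnorm : PklNormal κ lam U) (hfine : PklFine κ lam U) :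
    {P : ↥(PklSet κ lam) | IsInaccOrd (kpt κ P.1)} ∈ U :=
  kappaP_inaccessible_set_mem_general κ lam huncount hkl U hcomp hnorm hfine
end
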